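/- Let b, c ∈ ℂ with |b| ≤ 1, |c| ≤ 1, set m = |4b − 2c| and n = |2c|, and assume m ≤ 2. Let ρ₁₀ be the smallest root in (0,1) of the equation (1 − e) + 2(m+n) r + (12 + 8e + 3 m n + e·m n) r² + (10 + 8e)(m+n) r³ + (22 + 22e + 6 m n + 6e·m n) r⁴ + (10 + 12e)(m+n) r⁵ + (12 + 16e + 3 m n + 5e·m n) r⁶ + (2 + 4e)(m+n) r⁷ + (1 + 3e) r⁸ = 0, where e is Euler's number (such a root exists). Then for every f ∈ K²_{b,c} and every z ∈ ℂ with 0 < |z| < ρ₁₀, writing w = z·f'(z)/f(z), one has |log(w/(2 − w))| < 1, where log denotes the principal branch of the complex logarithm. (That is, ρ₁₀ is the radius of sigmoid starlikeness for the class K²_{b,c}.) -/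

import Mathlib

/-!
Write `f(z) = z p(z) q(z) / (1 - z²)` with `p = f / g` and `q = g (1 - z²) / z`. Both `p` and `q`
have positive real part and value `1` at `0`, with `p'(0) = 4b - 2c` and `q'(0) = 2c`, and
`z f'/f - 1 = z p'/p + z q'/q + 2z² / (1 - z²)`.

For such a `p`, `(p - 1) / (p + 1) = z ψ(z)` with `ψ` a self-map of the closed disc and
`ψ(0) = p'(0) / 2`, so `z p'/p = 2z (ψ + z ψ') / (1 - z² ψ²)`. The Schwarz–Pick bounds
`|ψ(z)| ≤ (|ψ(0)| + r) / (1 + |ψ(0)| r)` and `|ψ'(z)| ≤ (1 - |ψ(z)|²) / (1 - r²)` then give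
`|z p'/p| ≤ r (M + 4r + M r²) / ((1 - r²)(1 + M r + r²))` with `M = |p'(0)|`.

Adding the three bounds, `|z f'/f - 1| < (e - 1) / (e + 1)` exactly when the degree-eight
polynomial of the statement is negative at `r = |z|`; that polynomial increases on `[0, ∞)`, so
this holds for `r < ρ`. Finally, comparing the power series of `log (1 + u) - log (1 - u)` with
its real counterpart, `|log ((1 + u) / (1 - u))| ≤ log ((1 + |u|) / (1 - |u|)) < 1` for
`|u| < (e - 1) / (e + 1)`; take `u = z f'/f - 1`.
-/

open Complex Real Metric Set Filter Topology ComplexConjugate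

noncomputable def mobius (a w : ℂ) : ℂ := (w - a) / (1 - conj a * w)

section Mobius

variable {a w : ℂ}

lemma one_sub_conj_mul_ne_zero (ha : ‖a‖ < 1) (hw : ‖w‖ ≤ 1) : 1 - conj a * w ≠ 0 := by
  intro h
  have h1 : ‖conj a * w‖ = 1 := by rw [← sub_eq_zero.mp h, norm_one]
  rw [norm_mul, RCLike.norm_conj] at h1
  nlinarith [norm_nonneg a, norm_nonneg w]

lemma sq_norm_one_sub_conj_mul_sub_sq_norm_sub (a w : ℂ) :
    ‖1 - conj a * w‖ ^ 2 - ‖w - a‖ ^ 2 = (1 - ‖a‖ ^ 2) * (1 - ‖w‖ ^ 2) := by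
  simp only [← normSq_eq_norm_sq, normSq_apply, sub_re, sub_im, mul_re, mul_im, conj_re, conj_im,
    one_re, one_im]
  ring

lemma norm_mobius_lt_one (ha : ‖a‖ < 1) (hw : ‖w‖ < 1) : ‖mobius a w‖ < 1 := by
  rw [mobius, norm_div, div_lt_one (norm_pos_iff.2 (one_sub_conj_mul_ne_zero ha hw.le)),
    ← sq_lt_sq₀ (norm_nonneg _) (norm_nonneg _), ← sub_pos,
    sq_norm_one_sub_conj_mul_sub_sq_norm_sub]
  have : ‖a‖ ^ 2 < 1 := by nlinarith [norm_nonneg a]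
  have : ‖w‖ ^ 2 < 1 := by nlinarith [norm_nonneg w]
  nlinarith

lemma mapsTo_mobius (ha : ‖a‖ < 1) : MapsTo (mobius a) (ball 0 1) (ball 0 1) := fun w hw => by
  rw [mem_ball_zero_iff] at hw ⊢
  exact norm_mobius_lt_one ha hw

lemma hasDerivAt_mobius (ha : ‖a‖ < 1) (hw : ‖w‖ ≤ 1) :
    HasDerivAt (mobius a) ((1 - conj a * a) / (1 - conj a * w) ^ 2) w := by
  have hd := ((hasDerivAt_id' w).sub_const a).div
    (((hasDerivAt_id' w).const_mul (conj a)).const_sub 1) (one_sub_conj_mul_ne_zero ha hw)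
  exact hd.congr_deriv (by ring)

lemma differentiableOn_mobius (ha : ‖a‖ < 1) : DifferentiableOn ℂ (mobius a) (ball 0 1) :=
  fun _ hw =>
    (hasDerivAt_mobius ha (mem_ball_zero_iff.1 hw).le).differentiableAt.differentiableWithinAt

@[simp] lemma mobius_self (a : ℂ) : mobius a a = 0 := by simp [mobius]

@[simp] lemma mobius_neg_zero (a : ℂ) : mobius (-a) 0 = a := by simp [mobius]

/-- The hypothesis `h` is `‖mobius a w‖ ≤ r` with the denominator cleared. -/
lemma norm_mul_one_add_le_of_norm_sub_le (ha : ‖a‖ ≤ 1) (hw : ‖w‖ ≤ 1) {r : ℝ} (hr0 : 0 ≤ r)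
    (hr1 : r ≤ 1) (h : ‖w - a‖ ≤ r * ‖1 - conj a * w‖) : ‖w‖ * (1 + ‖a‖ * r) ≤ ‖a‖ + r := by
  have hre : (conj a * w).re ≤ ‖a‖ * ‖w‖ := by
    simpa [norm_mul] using re_le_norm (conj a * w)
  have hsq : ‖w - a‖ ^ 2 ≤ (r * ‖1 - conj a * w‖) ^ 2 := pow_le_pow_left₀ (norm_nonneg _) h 2
  have key : (‖w‖ - ‖a‖) ^ 2 ≤ (r * (1 - ‖a‖ * ‖w‖)) ^ 2 := by
    have e1 : ‖w - a‖ ^ 2 = ‖w‖ ^ 2 + ‖a‖ ^ 2 - 2 * (conj a * w).re := by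
      simp only [← normSq_eq_norm_sq, normSq_apply, sub_re, sub_im, mul_re, conj_re, conj_im]
      ring
    have e2 : ‖1 - conj a * w‖ ^ 2 = 1 + ‖a‖ ^ 2 * ‖w‖ ^ 2 - 2 * (conj a * w).re := by
      simp only [← normSq_eq_norm_sq, normSq_apply, sub_re, sub_im, mul_re, mul_im, conj_re,
        conj_im, one_re, one_im]
      ring
    rw [mul_pow, e1, e2] at hsq
    nlinarith [mul_le_mul_of_nonneg_left hre (by nlinarith : (0:ℝ) ≤ 2 * (1 - r ^ 2))]
  have hpos : 0 ≤ r * (1 - ‖a‖ * ‖w‖) :=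
    mul_nonneg hr0 (by nlinarith [norm_nonneg a, norm_nonneg w])
  have := (abs_le_of_sq_le_sq' key hpos).2
  nlinarith

end Mobius

section SchwarzPick

variable {ψ : ℂ → ℂ} {z : ℂ}

theorem norm_mul_one_add_le_of_mapsTo_ball (hd : DifferentiableOn ℂ ψ (ball 0 1))
    (hψ : MapsTo ψ (ball 0 1) (ball 0 1)) (hz : ‖z‖ < 1) :
    ‖ψ z‖ * (1 + ‖ψ 0‖ * ‖z‖) ≤ ‖ψ 0‖ + ‖z‖ := by
  have h0 : ‖ψ 0‖ < 1 := mem_ball_zero_iff.1 (hψ (mem_ball_self one_pos))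
  have hψz : ‖ψ z‖ < 1 := mem_ball_zero_iff.1 (hψ (mem_ball_zero_iff.2 hz))
  have hschwarz : ‖mobius (ψ 0) (ψ z)‖ ≤ ‖z‖ :=
    Complex.norm_le_norm_of_mapsTo_ball (f := mobius (ψ 0) ∘ ψ)
      ((differentiableOn_mobius h0).comp hd hψ)
      (((mapsTo_mobius h0).comp hψ).mono_right ball_subset_closedBall) (by simp) hz
  rw [mobius, norm_div, div_le_iff₀ (norm_pos_iff.2 (one_sub_conj_mul_ne_zero h0 hψz.le))]
    at hschwarz
  exact norm_mul_one_add_le_of_norm_sub_le h0.le hψz.le (norm_nonneg z) hz.le hschwarz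

theorem norm_deriv_mul_le_of_mapsTo_ball (hd : DifferentiableOn ℂ ψ (ball 0 1))
    (hψ : MapsTo ψ (ball 0 1) (ball 0 1)) (hz : ‖z‖ < 1) :
    ‖deriv ψ z‖ * (1 - ‖z‖ ^ 2) ≤ 1 - ‖ψ z‖ ^ 2 := by
  have hz' : z ∈ ball 0 1 := mem_ball_zero_iff.2 hz
  have hψz : ‖ψ z‖ < 1 := mem_ball_zero_iff.1 (hψ hz')
  have hnz : ‖-z‖ < 1 := by rwa [norm_neg]
  set χ := mobius (ψ z) ∘ ψ ∘ mobius (-z)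
  have hχ0 : χ 0 = 0 := by simp [χ]
  have hχ : ‖deriv χ 0‖ ≤ 1 := by
    have hmaps : MapsTo χ (ball 0 1) (ball 0 1) :=
      (mapsTo_mobius hψz).comp (hψ.comp (mapsTo_mobius hnz))
    refine Complex.norm_deriv_le_one_of_mapsTo_ball ((differentiableOn_mobius hψz).comp
      (hd.comp (differentiableOn_mobius hnz) (mapsTo_mobius hnz)) (hψ.comp (mapsTo_mobius hnz)))
      ?_ one_pos
    rw [hχ0]
    exact hmaps.mono_right ball_subset_closedBall
  have hderiv : HasDerivAt χ ((1 - conj (ψ z) * ψ z) / (1 - conj (ψ z) * ψ z) ^ 2 *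
      (deriv ψ z * ((1 - conj (-z) * -z) / (1 - conj (-z) * 0) ^ 2))) 0 := by
    have hm := hasDerivAt_mobius hnz (norm_zero.trans_le zero_le_one)
    have hψd : HasDerivAt ψ (deriv ψ z) (mobius (-z) 0) := by
      rw [mobius_neg_zero]
      exact (hd.differentiableAt (isOpen_ball.mem_nhds hz')).hasDerivAt
    have hm' : HasDerivAt (mobius (ψ z)) ((1 - conj (ψ z) * ψ z) / (1 - conj (ψ z) * ψ z) ^ 2)
        ((ψ ∘ mobius (-z)) 0) := by
      rw [Function.comp_apply, mobius_neg_zero]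
      exact hasDerivAt_mobius hψz hψz.le
    exact hm'.comp 0 (hψd.comp 0 hm)
  have hs : (0 : ℝ) < 1 - ‖ψ z‖ ^ 2 := by nlinarith [norm_nonneg (ψ z)]
  have hval : deriv χ 0 = deriv ψ z * ((1 - ‖z‖ ^ 2 : ℝ) : ℂ) / ((1 - ‖ψ z‖ ^ 2 : ℝ) : ℂ) := by
    have hcoef : (1 : ℂ) - conj (ψ z) * ψ z = ((1 - ‖ψ z‖ ^ 2 : ℝ) : ℂ) := by
      rw [conj_mul']; push_cast; ring
    have hcoef' : (1 : ℂ) - conj (-z) * -z = ((1 - ‖z‖ ^ 2 : ℝ) : ℂ) := by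
      rw [conj_mul', norm_neg]; push_cast; ring
    have : ((1 - ‖ψ z‖ ^ 2 : ℝ) : ℂ) ≠ 0 := ofReal_ne_zero.2 hs.ne'
    rw [hderiv.deriv, hcoef, hcoef', mul_zero, sub_zero, one_pow, div_one]
    field_simp
  rw [hval, norm_div, norm_mul, norm_real, norm_real, Real.norm_of_nonneg hs.le,
    Real.norm_of_nonneg (by nlinarith [norm_nonneg z]), div_le_one hs] at hχ
  exact hχ

lemma mapsTo_ball_or_eqOn_const (hd : DifferentiableOn ℂ ψ (ball 0 1))
    (hψ : MapsTo ψ (ball 0 1) (closedBall 0 1)) :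
    MapsTo ψ (ball 0 1) (ball 0 1) ∨ EqOn ψ (fun _ => ψ 0) (ball 0 1) := by
  refine or_iff_not_imp_left.2 fun hball => ?_
  simp only [MapsTo, not_forall, mem_ball_zero_iff, not_lt] at hball
  obtain ⟨w, hw, hw1⟩ := hball
  have hmax : IsMaxOn (norm ∘ ψ) (ball 0 1) w := fun x hx =>
    (mem_closedBall_zero_iff.1 (hψ hx)).trans hw1
  have hconst := Complex.eqOn_of_isPreconnected_of_isMaxOn_norm (convex_ball 0 1).isPreconnected
    isOpen_ball hd (mem_ball_zero_iff.2 hw) hmax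
  intro x hx
  rw [hconst hx, hconst (mem_ball_self one_pos)]
  rfl

theorem schwarzPick_of_mapsTo_closedBall (hd : DifferentiableOn ℂ ψ (ball 0 1))
    (hψ : MapsTo ψ (ball 0 1) (closedBall 0 1)) (hz : ‖z‖ < 1) :
    ‖ψ z‖ * (1 + ‖ψ 0‖ * ‖z‖) ≤ ‖ψ 0‖ + ‖z‖ ∧ ‖deriv ψ z‖ * (1 - ‖z‖ ^ 2) ≤ 1 - ‖ψ z‖ ^ 2 := by
  rcases mapsTo_ball_or_eqOn_const hd hψ with hball | hconst
  · exact ⟨norm_mul_one_add_le_of_mapsTo_ball hd hball hz,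
      norm_deriv_mul_le_of_mapsTo_ball hd hball hz⟩
  · have hz' : z ∈ ball (0 : ℂ) 1 := mem_ball_zero_iff.2 hz
    have hder : deriv ψ z = 0 := by
      rw [(eventuallyEq_of_mem (isOpen_ball.mem_nhds hz') hconst).deriv_eq, deriv_const]
    have h0 : ‖ψ 0‖ ≤ 1 := mem_closedBall_zero_iff.1 (hψ (mem_ball_self one_pos))
    rw [show ψ z = ψ 0 from hconst hz', hder, norm_zero, zero_mul]
    constructor <;> nlinarith [norm_nonneg (ψ 0), norm_nonneg z,
      mul_nonneg (mul_nonneg (sub_nonneg.2 h0) (norm_nonneg (ψ 0))) (norm_nonneg z)]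

end SchwarzPick

structure IsCaratheodory (p : ℂ → ℂ) : Prop where
  differentiableOn : DifferentiableOn ℂ p (ball 0 1)
  map_zero : p 0 = 1
  re_pos : ∀ w ∈ ball (0 : ℂ) 1, 0 < (p w).re

noncomputable def logDerivBound (M r : ℝ) : ℝ :=
  r * (M + 4 * r + M * r ^ 2) / ((1 - r ^ 2) * (1 + M * r + r ^ 2))

lemma le_logDerivBound {A d s r a : ℝ} (hr0 : 0 ≤ r) (hr1 : r < 1) (hs0 : 0 ≤ s) (hs1 : s ≤ 1)
    (ha : 0 ≤ a) (hA : A * (1 - r ^ 2 * s ^ 2) ≤ 2 * r * (s + r * d))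
    (hd : d * (1 - r ^ 2) ≤ 1 - s ^ 2) (hs : s * (1 + a * r) ≤ a + r) :
    A ≤ logDerivBound (2 * a) r := by
  have hrs : 0 < 1 - r * s := by nlinarith
  have hrs' : 0 < 1 + r * s := by nlinarith [mul_nonneg hr0 hs0]
  have hr2 : 0 < 1 - r ^ 2 := by nlinarith
  have e1 : A * (1 - r ^ 2 * s ^ 2) * (1 - r ^ 2) ≤ 2 * r * (r + s) * (1 - r * s) := by
    nlinarith [mul_le_mul_of_nonneg_right hA hr2.le,
      mul_le_mul_of_nonneg_left hd (by positivity : (0:ℝ) ≤ 2 * r ^ 2)]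
  -- `A ≤ 2r (r + s) / ((1 + r s)(1 - r²))`, increasing in `s`; then insert `hs`.
  have hA' : 0 ≤ 2 * r * (r + s) - A * (1 + r * s) * (1 - r ^ 2) := by
    nlinarith [e1, hrs, mul_pos hrs hrs']
  rw [logDerivBound, le_div_iff₀ (by positivity)]
  nlinarith [mul_nonneg (by positivity : (0:ℝ) ≤ 1 + 2 * a * r + r ^ 2) hA',
    mul_nonneg (mul_nonneg hr0 hr2.le) (by linarith : (0:ℝ) ≤ 2 * a + 2 * r - s * (2 + 2 * a * r)),
    hrs']

lemma norm_sub_one_lt_norm_add_one {w : ℂ} (hw : 0 < w.re) : ‖w - 1‖ < ‖w + 1‖ := by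
  rw [← sq_lt_sq₀ (norm_nonneg _) (norm_nonneg _)]
  simp only [← normSq_eq_norm_sq, normSq_apply, sub_re, sub_im, add_re, add_im, one_re, one_im]
  nlinarith

namespace IsCaratheodory

variable {p : ℂ → ℂ} {z : ℂ}

lemma add_one_ne_zero (hp : IsCaratheodory p) {w : ℂ} (hw : w ∈ ball (0 : ℂ) 1) : p w + 1 ≠ 0 :=
  fun h => by
    have := congrArg re h
    simp only [add_re, one_re, zero_re] at this
    linarith [hp.re_pos w hw]

lemma of_re_pos_of_ne_zero {p : ℂ → ℂ} (hd : DifferentiableOn ℂ p (ball 0 1)) (h0 : p 0 = 1)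
    (hre : ∀ w ∈ ball (0 : ℂ) 1, w ≠ 0 → 0 < (p w).re) : IsCaratheodory p where
  differentiableOn := hd
  map_zero := h0
  re_pos w hw := by
    rcases eq_or_ne w 0 with rfl | hw0
    · simp [h0]
    · exact hre w hw hw0

lemma ne_zero (hp : IsCaratheodory p) {w : ℂ} (hw : w ∈ ball (0 : ℂ) 1) : p w ≠ 0 :=
  fun h => by simpa [h] using hp.re_pos w hw

theorem norm_mul_logDeriv_le (hp : IsCaratheodory p) (hz : ‖z‖ < 1) :
    ‖z * logDeriv p z‖ ≤ logDerivBound ‖deriv p 0‖ ‖z‖ := by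
  have hz' : z ∈ ball (0 : ℂ) 1 := mem_ball_zero_iff.2 hz
  have h0 : (0 : ℂ) ∈ ball (0 : ℂ) 1 := mem_ball_self one_pos
  set ω : ℂ → ℂ := fun w => (p w - 1) / (p w + 1)
  have hωd : DifferentiableOn ℂ ω (ball 0 1) :=
    (hp.differentiableOn.sub_const 1).div (hp.differentiableOn.add_const 1)
      fun w hw => hp.add_one_ne_zero hw
  have hω : MapsTo ω (ball 0 1) (ball 0 1) := fun w hw => by
    rw [mem_ball_zero_iff, norm_div, div_lt_one (norm_pos_iff.2 (hp.add_one_ne_zero hw))]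
    exact norm_sub_one_lt_norm_add_one (hp.re_pos w hw)
  have hω0 : ω 0 = 0 := by simp [ω, hp.map_zero]
  set ψ := dslope ω 0
  have hψd : DifferentiableOn ℂ ψ (ball 0 1) :=
    (differentiableOn_dslope (isOpen_ball.mem_nhds h0)).2 hωd
  have hψ : MapsTo ψ (ball 0 1) (closedBall 0 1) := fun w hw => by
    have := Complex.norm_dslope_le_div_of_mapsTo_ball hωd
      (by rw [hω0]; exact hω.mono_right ball_subset_closedBall) hw
    rwa [div_one, ← mem_closedBall_zero_iff] at this
  have hωψ : ω = fun w => w * ψ w := funext fun w => by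
    simpa using (sub_smul_dslope_of_zero hω0 w).symm
  have hpd : ∀ w ∈ ball (0 : ℂ) 1, HasDerivAt p (deriv p w) w := fun w hw =>
    (hp.differentiableOn.differentiableAt (isOpen_ball.mem_nhds hw)).hasDerivAt
  have hωderiv : ∀ w ∈ ball (0 : ℂ) 1, HasDerivAt ω (2 * deriv p w / (p w + 1) ^ 2) w :=
    fun w hw => (((hpd w hw).sub_const 1).div ((hpd w hw).add_const 1)
      (hp.add_one_ne_zero hw)).congr_deriv (by ring)
  have hψ0 : 2 * ‖ψ 0‖ = ‖deriv p 0‖ := by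
    rw [show ψ 0 = deriv ω 0 from dslope_same ω 0, (hωderiv 0 h0).deriv, hp.map_zero]
    norm_num [norm_div]
    ring
  have hidentity : z * logDeriv p z * (1 - ω z ^ 2) = 2 * z * (ψ z + z * deriv ψ z) := by
    have hψz : HasDerivAt ω (ψ z + z * deriv ψ z) z := by
      rw [hωψ]
      exact ((hasDerivAt_id' z).mul
        (hψd.differentiableAt (isOpen_ball.mem_nhds hz')).hasDerivAt).congr_deriv (by ring)
    rw [hψz.unique (hωderiv z hz'), logDeriv_apply, show ω z = (p z - 1) / (p z + 1) from rfl]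
    have := hp.add_one_ne_zero hz'
    have := hp.ne_zero hz'
    field_simp
    ring
  obtain ⟨hpick, hpick'⟩ := schwarzPick_of_mapsTo_closedBall hψd hψ hz
  have hωz : ‖ω z‖ = ‖z‖ * ‖ψ z‖ := by rw [hωψ, norm_mul]
  have hlower : 1 - ‖z‖ ^ 2 * ‖ψ z‖ ^ 2 ≤ ‖1 - ω z ^ 2‖ := by
    have := norm_sub_norm_le (1 : ℂ) (ω z ^ 2)
    rwa [norm_one, norm_pow, hωz, mul_pow] at this
  rw [← hψ0]
  refine le_logDerivBound (norm_nonneg z) hz (norm_nonneg _)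
    (mem_closedBall_zero_iff.1 (hψ hz')) (norm_nonneg _) ?_ hpick' (by linarith)
  calc ‖z * logDeriv p z‖ * (1 - ‖z‖ ^ 2 * ‖ψ z‖ ^ 2)
      ≤ ‖z * logDeriv p z‖ * ‖1 - ω z ^ 2‖ := by gcongr
    _ = 2 * ‖z‖ * ‖ψ z + z * deriv ψ z‖ := by
      rw [← norm_mul, hidentity, norm_mul, norm_mul, Complex.norm_two]
    _ ≤ 2 * ‖z‖ * (‖ψ z‖ + ‖z‖ * ‖deriv ψ z‖) := by
      gcongr
      exact (norm_add_le _ _).trans_eq (by rw [norm_mul])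

end IsCaratheodory

lemma Complex.hasSum_log_sub_log_of_norm_lt_one {u : ℂ} (hu : ‖u‖ < 1) :
    HasSum (fun k : ℕ => 2 * (1 / (2 * k + 1)) * u ^ (2 * k + 1))
      (Complex.log (1 + u) - Complex.log (1 - u)) := by
  set term := fun n : ℕ => -((-u) ^ (n + 1) / (n + 1)) + u ^ (n + 1) / (n + 1)
  have hterm : term ∘ (2 * ·) = fun k : ℕ => 2 * (1 / (2 * k + 1)) * u ^ (2 * k + 1) := by
    ext k
    simp only [term, Function.comp_apply, Odd.neg_pow (⟨k, rfl⟩ : Odd (2 * k + 1))]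
    push_cast
    ring
  rw [← hterm, (mul_right_injective₀ (two_ne_zero' ℕ)).hasSum_iff]
  · have h := (hasSum_taylorSeries_neg_log' (z := -u) (by rwa [norm_neg])).neg.add
      (hasSum_taylorSeries_neg_log' hu)
    rw [sub_neg_eq_add, neg_neg, ← sub_eq_add_neg] at h
    exact h
  · intro n hn
    rw [range_two_mul, Set.mem_ofPred_eq, ← Nat.even_add_one] at hn
    simp only [term, Even.neg_pow hn, neg_add_cancel]

lemma norm_log_one_add_div_one_sub_le {u : ℂ} (hu : ‖u‖ < 1) :
    ‖Complex.log ((1 + u) / (1 - u))‖ ≤ Real.log (1 + ‖u‖) - Real.log (1 - ‖u‖) := by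
  have hre : ∀ v : ℂ, ‖v‖ < 1 → 0 < (1 + v).re := fun v hv => by
    rw [add_re, one_re]
    linarith [(abs_lt.1 ((abs_re_le_norm v).trans_lt hv)).1]
  have hplus := hre u hu
  have hminus : 0 < (1 - u).re := by simpa [sub_eq_add_neg] using hre (-u) (by rwa [norm_neg])
  have hlog : Complex.log ((1 + u) / (1 - u)) = Complex.log (1 + u) - Complex.log (1 - u) := by
    have harg₁ := abs_lt.1 (abs_arg_lt_pi_div_two_iff.2 (Or.inl hplus))
    have harg₂ := abs_lt.1 (abs_arg_lt_pi_div_two_iff.2 (Or.inl hminus))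
    have hexp : Complex.exp (Complex.log (1 + u) - Complex.log (1 - u)) = (1 + u) / (1 - u) := by
      rw [Complex.exp_sub, Complex.exp_log, Complex.exp_log]
      · exact fun h => by simp [h] at hminus
      · exact fun h => by simp [h] at hplus
    rw [← hexp, Complex.log_exp] <;> rw [sub_im, log_im, log_im] <;> linarith [Real.pi_pos]
  rw [hlog]
  refine (hasSum_log_sub_log_of_norm_lt_one hu).norm_le_of_bounded
    (Real.hasSum_log_sub_log_of_abs_lt_one (by rwa [abs_norm])) fun k => le_of_eq ?_
  have : (2 * (k : ℂ) + 1) = ((2 * k + 1 : ℕ) : ℂ) := by push_cast; ring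
  rw [this, norm_mul, norm_mul, norm_div, norm_pow, Complex.norm_natCast, Complex.norm_two,
    norm_one]
  push_cast
  ring

theorem norm_log_div_two_sub_lt_one {w : ℂ}
    (hw : ‖w - 1‖ < (Real.exp 1 - 1) / (Real.exp 1 + 1)) : ‖Complex.log (w / (2 - w))‖ < 1 := by
  have he : 1 < Real.exp 1 := Real.one_lt_exp_iff.2 one_pos
  have ht : ‖w - 1‖ < 1 := hw.trans ((div_lt_one (by linarith)).2 (by linarith))
  have hlt : (1 + ‖w - 1‖) / (1 - ‖w - 1‖) < Real.exp 1 := by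
    rw [lt_div_iff₀ (by linarith)] at hw
    rw [div_lt_iff₀ (by linarith)]
    linarith
  have hbound := norm_log_one_add_div_one_sub_le ht
  rw [show (1 + (w - 1)) / (1 - (w - 1)) = w / (2 - w) by ring,
    ← Real.log_div (by positivity) (by linarith)] at hbound
  calc _ ≤ _ := hbound
    _ < Real.log (Real.exp 1) := Real.log_lt_log (div_pos (by positivity) (by linarith)) hlt
    _ = 1 := Real.log_exp 1

noncomputable def radiusPoly (m n r : ℝ) : ℝ :=
  (1 - Real.exp 1) + 2 * (m + n) * r
    + (12 + 8 * Real.exp 1 + 3 * m * n + Real.exp 1 * m * n) * r ^ 2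
    + (10 + 8 * Real.exp 1) * (m + n) * r ^ 3
    + (22 + 22 * Real.exp 1 + 6 * m * n + 6 * Real.exp 1 * m * n) * r ^ 4
    + (10 + 12 * Real.exp 1) * (m + n) * r ^ 5
    + (12 + 16 * Real.exp 1 + 3 * m * n + 5 * Real.exp 1 * m * n) * r ^ 6
    + (2 + 4 * Real.exp 1) * (m + n) * r ^ 7 + (1 + 3 * Real.exp 1) * r ^ 8

section RadiusPoly

variable {m n : ℝ}

lemma radiusPoly_strictMonoOn (hm : 0 ≤ m) (hn : 0 ≤ n) :
    StrictMonoOn (radiusPoly m n) (Ici 0) := by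
  intro r hr s _ hrs
  simp only [radiusPoly]
  rw [mem_Ici] at hr
  refine add_lt_add_of_le_of_lt ?_ (by gcongr)
  gcongr

lemma radiusPoly_one_pos (hm : 0 ≤ m) (hn : 0 ≤ n) : 0 < radiusPoly m n 1 := by
  have := mul_nonneg hm hn
  have := Real.exp_pos 1
  simp only [radiusPoly]
  nlinarith

lemma radiusPoly_neg_of_lt (hm : 0 ≤ m) (hn : 0 ≤ n) {ρ r : ℝ} (hρ : radiusPoly m n ρ = 0)
    (hr : 0 ≤ r) (hrρ : r < ρ) : radiusPoly m n r < 0 :=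
  hρ ▸ radiusPoly_strictMonoOn hm hn hr (mem_Ici.2 (hr.trans hrρ.le)) hrρ

lemma lt_one_of_radiusPoly_eq_zero (hm : 0 ≤ m) (hn : 0 ≤ n) {ρ : ℝ} (hρ : radiusPoly m n ρ = 0)
    (hρ0 : 0 ≤ ρ) : ρ < 1 := by
  by_contra! h
  have := (radiusPoly_strictMonoOn hm hn).monotoneOn (mem_Ici.2 zero_le_one) (mem_Ici.2 hρ0) h
  linarith [radiusPoly_one_pos hm hn]

/-- After clearing denominators, the difference of the two sides is `radiusPoly m n r / (1 + r²)`
times a positive factor. -/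
lemma logDerivBound_add_lt (hm : 0 ≤ m) (hn : 0 ≤ n) {r : ℝ} (hr0 : 0 ≤ r) (hr1 : r < 1)
    (hP : radiusPoly m n r < 0) :
    logDerivBound m r + logDerivBound n r + 2 * r ^ 2 / (1 - r ^ 2)
      < (Real.exp 1 - 1) / (Real.exp 1 + 1) := by
  have hr2 : 0 < 1 - r ^ 2 := by nlinarith
  have hDm : 0 < 1 + m * r + r ^ 2 := by positivity
  have hDn : 0 < 1 + n * r + r ^ 2 := by positivity
  set N := r * (m + 4 * r + m * r ^ 2) * (1 + n * r + r ^ 2)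
    + r * (n + 4 * r + n * r ^ 2) * (1 + m * r + r ^ 2)
    + 2 * r ^ 2 * (1 + m * r + r ^ 2) * (1 + n * r + r ^ 2)
  have hsum : logDerivBound m r + logDerivBound n r + 2 * r ^ 2 / (1 - r ^ 2)
      = N / ((1 - r ^ 2) * (1 + m * r + r ^ 2) * (1 + n * r + r ^ 2)) := by
    unfold logDerivBound
    field_simp
    ring
  have key : (1 + r ^ 2) * ((Real.exp 1 + 1) * N
      - (Real.exp 1 - 1) * ((1 - r ^ 2) * (1 + m * r + r ^ 2) * (1 + n * r + r ^ 2)))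
      = radiusPoly m n r := by
    unfold radiusPoly
    ring
  have hneg := neg_of_mul_neg_right (key ▸ hP) (by positivity)
  rw [hsum, div_lt_div_iff₀ (by positivity) (by linarith [Real.exp_pos 1])]
  linarith

end RadiusPoly

lemma deriv_dslope_zero {f : ℂ → ℂ} (hf : AnalyticAt ℂ f 0) :
    deriv (dslope f 0) 0 = iteratedDeriv 2 f 0 / 2 := by
  obtain ⟨p, hp⟩ := hf
  have h1 : deriv (dslope f 0) 0 = p.fslope.coeff 1 := hp.has_fpower_series_dslope_fslope.deriv
  rw [h1, FormalMultilinearSeries.coeff_fslope]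
  obtain ⟨r, hball⟩ := hp
  rw [iteratedDeriv_eq_iteratedFDeriv, ← hball.factorial_smul (1 : ℂ) 2]
  change p.coeff 2 = (Nat.factorial 2 • p.coeff 2) / 2
  rw [Nat.factorial_two, nsmul_eq_mul]
  push_cast
  ring

lemma eq_mul_dslope_of_eq_zero {f : ℂ → ℂ} (hf0 : f 0 = 0) (w : ℂ) :
    f w = w * dslope f 0 w := by
  simpa using (sub_smul_dslope_of_zero hf0 w).symm

lemma dslope_ne_zero_of_ne_zero {g : ℂ → ℂ} {w : ℂ} (hg0 : g 0 = 0) (hg1 : deriv g 0 ≠ 0)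
    (hw : w ≠ 0 → g w ≠ 0) : dslope g 0 w ≠ 0 := by
  rcases eq_or_ne w 0 with rfl | hw0
  · rwa [dslope_same]
  · intro h
    exact hw hw0 (by rw [eq_mul_dslope_of_eq_zero hg0, h, mul_zero])

lemma one_sub_sq_ne_zero {w : ℂ} (hw : ‖w‖ < 1) : 1 - w ^ 2 ≠ 0 := by
  intro h
  have := congrArg norm (sub_eq_zero.1 h)
  rw [norm_one, norm_pow] at this
  nlinarith [norm_nonneg w]

theorem exists_isCaratheodory_factorization {f g : ℂ → ℂ} (hf : DifferentiableOn ℂ f (ball 0 1))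
    (hf0 : f 0 = 0) (hf1 : deriv f 0 = 1) (hg : DifferentiableOn ℂ g (ball 0 1)) (hg0 : g 0 = 0)
    (hg1 : deriv g 0 = 1)
    (hpos : ∀ w ∈ ball (0 : ℂ) 1, w ≠ 0 → 0 < (f w / g w).re ∧ 0 < (g w * (1 - w ^ 2) / w).re) :
    ∃ p q : ℂ → ℂ, IsCaratheodory p ∧ IsCaratheodory q ∧
      deriv p 0 = deriv (dslope f 0) 0 - deriv (dslope g 0) 0 ∧
      deriv q 0 = deriv (dslope g 0) 0 ∧
      EqOn f (fun w => w * p w * q w / (1 - w ^ 2)) (ball 0 1) := by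
  have h0 : (0 : ℂ) ∈ ball (0 : ℂ) 1 := mem_ball_self one_pos
  set F := dslope f 0
  set G := dslope g 0
  have hfF : ∀ w, f w = w * F w := eq_mul_dslope_of_eq_zero hf0
  have hgG : ∀ w, g w = w * G w := eq_mul_dslope_of_eq_zero hg0
  have hF0 : F 0 = 1 := (dslope_same f 0).trans hf1
  have hG0 : G 0 = 1 := (dslope_same g 0).trans hg1
  have hFd : DifferentiableOn ℂ F (ball 0 1) :=
    (differentiableOn_dslope (isOpen_ball.mem_nhds h0)).2 hf
  have hGd : DifferentiableOn ℂ G (ball 0 1) :=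
    (differentiableOn_dslope (isOpen_ball.mem_nhds h0)).2 hg
  have hG : ∀ w ∈ ball (0 : ℂ) 1, G w ≠ 0 := fun w hw =>
    dslope_ne_zero_of_ne_zero hg0 (by rw [hg1]; exact one_ne_zero) fun hw0 hgw => by
      simpa [hgw] using (hpos w hw hw0).2
  have hF'd : HasDerivAt F (deriv F 0) 0 :=
    (hFd.differentiableAt (isOpen_ball.mem_nhds h0)).hasDerivAt
  have hG'd : HasDerivAt G (deriv G 0) 0 :=
    (hGd.differentiableAt (isOpen_ball.mem_nhds h0)).hasDerivAt
  refine ⟨fun w => F w / G w, fun w => G w * (1 - w ^ 2), ?_, ?_, ?_, ?_, ?_⟩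
  · refine .of_re_pos_of_ne_zero (hFd.div hGd hG) (by simp [hF0, hG0]) fun w hw hw0 => ?_
    convert (hpos w hw hw0).1 using 2
    rw [hfF, hgG, mul_div_mul_left _ _ hw0]
  · refine .of_re_pos_of_ne_zero (hGd.mul (by fun_prop)) (by simp [hG0]) fun w hw hw0 => ?_
    convert (hpos w hw hw0).2 using 2
    rw [hgG]
    field_simp
  · rw [(hF'd.fun_div hG'd (by rw [hG0]; exact one_ne_zero)).deriv, hF0, hG0]
    ring
  · have := hG'd.fun_mul ((hasDerivAt_pow 2 (0 : ℂ)).const_sub 1)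
    rw [this.deriv, hG0]
    ring
  · intro w hw
    have := one_sub_sq_ne_zero (mem_ball_zero_iff.1 hw)
    have := hG w hw
    rw [hfF]
    field_simp

lemma norm_two_mul_sq_div_one_sub_sq_le {z : ℂ} (hz : ‖z‖ < 1) :
    ‖2 * z ^ 2 / (1 - z ^ 2)‖ ≤ 2 * ‖z‖ ^ 2 / (1 - ‖z‖ ^ 2) := by
  have hlower : 1 - ‖z‖ ^ 2 ≤ ‖1 - z ^ 2‖ := by
    have := norm_sub_norm_le (1 : ℂ) (z ^ 2)
    rwa [norm_one, norm_pow] at this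
  rw [norm_div, norm_mul, norm_pow, Complex.norm_two]
  gcongr
  nlinarith [norm_nonneg z]

lemma mul_logDeriv_sub_one_eq {f p q : ℂ → ℂ} {z : ℂ}
    (hf : f =ᶠ[𝓝 z] fun w => w * p w * q w / (1 - w ^ 2)) (hz : z ≠ 0) (hz2 : 1 - z ^ 2 ≠ 0)
    (hp : p z ≠ 0) (hq : q z ≠ 0) (hpd : DifferentiableAt ℂ p z) (hqd : DifferentiableAt ℂ q z) :
    z * logDeriv f z - 1 = z * logDeriv p z + z * logDeriv q z + 2 * z ^ 2 / (1 - z ^ 2) := by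
  have hd := (((hasDerivAt_id' z).fun_mul hpd.hasDerivAt).fun_mul hqd.hasDerivAt).fun_div
    ((hasDerivAt_pow 2 z).const_sub 1) hz2
  rw [(logDeriv_congr_nhds hf).eq_of_nhds, logDeriv_apply, hd.deriv, logDeriv_apply,
    logDeriv_apply]
  field_simp
  ring

theorem norm_mul_logDeriv_sub_one_le {f p q : ℂ → ℂ} (hp : IsCaratheodory p)
    (hq : IsCaratheodory q) (hf : EqOn f (fun w => w * p w * q w / (1 - w ^ 2)) (ball 0 1))
    {z : ℂ} (hz : ‖z‖ < 1) (hz0 : z ≠ 0) :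
    ‖z * logDeriv f z - 1‖ ≤ logDerivBound ‖deriv p 0‖ ‖z‖ + logDerivBound ‖deriv q 0‖ ‖z‖
      + 2 * ‖z‖ ^ 2 / (1 - ‖z‖ ^ 2) := by
  have hz' : z ∈ ball (0 : ℂ) 1 := mem_ball_zero_iff.2 hz
  rw [mul_logDeriv_sub_one_eq (eventuallyEq_of_mem (isOpen_ball.mem_nhds hz') hf) hz0
    (one_sub_sq_ne_zero hz) (hp.ne_zero hz') (hq.ne_zero hz')
    (hp.differentiableOn.differentiableAt (isOpen_ball.mem_nhds hz'))
    (hq.differentiableOn.differentiableAt (isOpen_ball.mem_nhds hz'))]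
  refine (norm_add₃_le ..).trans ?_
  gcongr
  · exact hp.norm_mul_logDeriv_le hz
  · exact hq.norm_mul_logDeriv_le hz
  · exact norm_two_mul_sq_div_one_sub_sq_le hz

theorem stmt_12_general (b c : ℂ)
    (m : ℝ) (hm : m = ‖4 * b - 2 * c‖)
    (n : ℝ) (hn : n = ‖2 * c‖)
    (f : ℂ → ℂ) (hf : AnalyticOnNhd ℂ f (Metric.ball (0:ℂ) 1))
    (hf0 : f 0 = 0) (hf1 : deriv f 0 = 1)
    (hf2 : iteratedDeriv 2 f 0 / 2 = 4 * b)
    (hg : ∃ g : ℂ → ℂ, AnalyticOnNhd ℂ g (Metric.ball (0:ℂ) 1) ∧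
      g 0 = 0 ∧ deriv g 0 = 1 ∧ iteratedDeriv 2 g 0 / 2 = 2 * c ∧
      ∀ z ∈ Metric.ball (0:ℂ) 1, z ≠ 0 →
        0 < (f z / g z).re ∧ 0 < (g z * (1 - z ^ 2) / z).re)
    (ρ : ℝ)
    (hroot : (1 - (Real.exp 1)) + 2*(m + n)*ρ + (12 + 8*(Real.exp 1) + 3*m*n + (Real.exp 1)*m*n)*ρ^2 + (10 + 8*(Real.exp 1))*(m + n)*ρ^3 + (22 + 22*(Real.exp 1) + 6*m*n + 6*(Real.exp 1)*m*n)*ρ^4 + (10 + 12*(Real.exp 1))*(m + n)*ρ^5 + (12 + 16*(Real.exp 1) + 3*m*n + 5*(Real.exp 1)*m*n)*ρ^6 + (2 + 4*(Real.exp 1))*(m + n)*ρ^7 + (1 + 3*(Real.exp 1))*ρ^8 = 0) :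
    ∀ z : ℂ, 0 < ‖z‖ → ‖z‖ < ρ →
      ‖Complex.log ((z * deriv f z / f z) /
        (2 - z * deriv f z / f z))‖ < 1 := by
  obtain ⟨g, hga, hg0, hg1, hg2, hpos⟩ := hg
  obtain ⟨p, q, hp, hq, hp', hq', hfpq⟩ := exists_isCaratheodory_factorization hf.differentiableOn
    hf0 hf1 hga.differentiableOn hg0 hg1 hpos
  have h0 : (0 : ℂ) ∈ ball (0 : ℂ) 1 := mem_ball_self one_pos
  have hpm : ‖deriv p 0‖ = m := by
    rw [hp', deriv_dslope_zero (hf 0 h0), deriv_dslope_zero (hga 0 h0), hf2, hg2, hm]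
  have hqn : ‖deriv q 0‖ = n := by rw [hq', deriv_dslope_zero (hga 0 h0), hg2, hn]
  have hm0 : 0 ≤ m := hm ▸ norm_nonneg _
  have hn0 : 0 ≤ n := hn ▸ norm_nonneg _
  intro z hz0 hzρ
  have hz1 : ‖z‖ < 1 :=
    hzρ.trans (lt_one_of_radiusPoly_eq_zero hm0 hn0 hroot (hz0.le.trans hzρ.le))
  apply norm_log_div_two_sub_lt_one
  rw [mul_div_assoc, ← logDeriv_apply]
  calc _ ≤ _ := norm_mul_logDeriv_sub_one_le hp hq hfpq hz1 (norm_pos_iff.1 hz0)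
    _ < _ := by
      rw [hpm, hqn]
      exact logDerivBound_add_lt hm0 hn0 (norm_nonneg z) hz1
        (radiusPoly_neg_of_lt hm0 hn0 hroot (norm_nonneg z) hzρ)

theorem stmt_12 (b c : ℂ) (hb : ‖b‖ ≤ 1) (hc : ‖c‖ ≤ 1)
    (m : ℝ) (hm : m = ‖4 * b - 2 * c‖)
    (n : ℝ) (hn : n = ‖2 * c‖)
    (hm2 : m ≤ 2)
    (f : ℂ → ℂ) (hf : AnalyticOnNhd ℂ f (Metric.ball (0:ℂ) 1))
    (hf0 : f 0 = 0) (hf1 : deriv f 0 = 1)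
    (hf2 : iteratedDeriv 2 f 0 / 2 = 4 * b)
    (hg : ∃ g : ℂ → ℂ, AnalyticOnNhd ℂ g (Metric.ball (0:ℂ) 1) ∧
      g 0 = 0 ∧ deriv g 0 = 1 ∧ iteratedDeriv 2 g 0 / 2 = 2 * c ∧
      ∀ z ∈ Metric.ball (0:ℂ) 1, z ≠ 0 →
        0 < (f z / g z).re ∧ 0 < (g z * (1 - z ^ 2) / z).re)
    (ρ : ℝ) (hρ : ρ ∈ Set.Ioo (0:ℝ) 1)
    (hroot : (1 - (Real.exp 1)) + 2*(m + n)*ρ + (12 + 8*(Real.exp 1) + 3*m*n + (Real.exp 1)*m*n)*ρ^2 + (10 + 8*(Real.exp 1))*(m + n)*ρ^3 + (22 + 22*(Real.exp 1) + 6*m*n + 6*(Real.exp 1)*m*n)*ρ^4 + (10 + 12*(Real.exp 1))*(m + n)*ρ^5 + (12 + 16*(Real.exp 1) + 3*m*n + 5*(Real.exp 1)*m*n)*ρ^6 + (2 + 4*(Real.exp 1))*(m + n)*ρ^7 + (1 + 3*(Real.exp 1))*ρ^8 = 0)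
    (hsmall : ∀ r ∈ Set.Ioo (0:ℝ) 1, (1 - (Real.exp 1)) + 2*(m + n)*r + (12 + 8*(Real.exp 1) + 3*m*n + (Real.exp 1)*m*n)*r^2 + (10 + 8*(Real.exp 1))*(m + n)*r^3 + (22 + 22*(Real.exp 1) + 6*m*n + 6*(Real.exp 1)*m*n)*r^4 + (10 + 12*(Real.exp 1))*(m + n)*r^5 + (12 + 16*(Real.exp 1) + 3*m*n + 5*(Real.exp 1)*m*n)*r^6 + (2 + 4*(Real.exp 1))*(m + n)*r^7 + (1 + 3*(Real.exp 1))*r^8 = 0 → ρ ≤ r) :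
    ∀ z : ℂ, 0 < ‖z‖ → ‖z‖ < ρ →
      ‖Complex.log ((z * deriv f z / f z) /
        (2 - z * deriv f z / f z))‖ < 1 :=
  stmt_12_general b c m hm n hn f hf hf0 hf1 hf2 hg ρ hroot
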